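/- The map ψ restricts to a bijection between the set E_n of Łukasiewicz paths of length n in which every up step is immediately followed by a flat step and every flat step at positive height is immediately preceded by an up step, and the set of Motzkin paths of length n avoiding both consecutive patterns UU and UD. -/

import Mathlib

/-- A Łukasiewicz path: vertical step components, each `≥ -1`, all partial sums
nonnegative, total sum `0`. -/
def IsLukas (w : List ℤ) : Prop :=
  (∀ s ∈ w, -1 ≤ s) ∧ (∀ k, 0 ≤ (w.take k).sum) ∧ w.sum = 0

/-- A Motzkin path: a Łukasiewicz path using only steps `(1,1)`, `(1,0)`, `(1,-1)`. -/
def IsMotzkin (w : List ℤ) : Prop :=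
  IsLukas w ∧ ∀ s ∈ w, s ≤ 1

/-- Every up step is immediately followed by a flat step. -/
def UpThenFlat (w : List ℤ) : Prop :=
  ∀ j : ℕ, ∀ s : ℤ, w[j]? = some s → 1 ≤ s → w[j + 1]? = some 0

/-- Every flat step at positive height is immediately preceded by an up step. -/
def FlatPosHeightAfterUp (w : List ℤ) : Prop :=
  ∀ j : ℕ, w[j + 1]? = some 0 → 0 < (w.take (j + 1)).sum →
    ∃ s : ℤ, w[j]? = some s ∧ 1 ≤ s

/-- Avoiding the consecutive pattern `UU`. -/
def AvoidsUU (w : List ℤ) : Prop :=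
  ∀ j : ℕ, ¬(w[j]? = some 1 ∧ w[j + 1]? = some 1)

/-- Avoiding the consecutive pattern `UD`. -/
def AvoidsUD (w : List ℤ) : Prop :=
  ∀ j : ℕ, ¬(w[j]? = some 1 ∧ w[j + 1]? = some (-1))

/-- `ψ` satisfies the defining recursive equations: `ψ(ε) = ε`,
`ψ(F L) = F ψ(L)`, and
`ψ(U_k L₁ D L₂ D … L_k D L) = U ψ(L₁) F ψ(L₂) F … ψ(L_k) D ψ(L)`. -/
def PsiEquations (ψ : List ℤ → List ℤ) : Prop :=
  ψ [] = [] ∧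
  (∀ L : List ℤ, IsLukas L → ψ (0 :: L) = 0 :: ψ L) ∧
  (∀ (Ls : List (List ℤ)) (L : List ℤ), Ls ≠ [] →
    (∀ M ∈ Ls, IsLukas M) → IsLukas L →
    ψ ((Ls.length : ℤ) :: ((Ls.map fun M => M ++ [(-1 : ℤ)]).flatten ++ L)) =
      1 :: ((List.intersperse [(0 : ℤ)] (Ls.map ψ)).flatten ++ (-1 : ℤ) :: ψ L))

/-!
Both sides are generated by unambiguous grammars, and `ψ` maps one onto the other rule by rule.
By the first-return decomposition, a path of `E` is empty, `F` followed by a path of `E`, or an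
arch `U_k F C D M₂ D ⋯ M_k D` followed by a path of `E`; the two step conditions force the `F`
after `U_k` and say exactly that `C, M₂, …, M_k`, which lie at positive height, are paths of the
same kind in which moreover every flat step follows an up step. Likewise a Motzkin path avoiding
`UU` and `UD` is empty, `F` followed by such a path, or `U F q F m₂ ⋯ F m_k D t`, where `q` and
the `mᵢ` have no flat step at height `0`. `ψ` sends the first kind of arch to the second, so by
structural induction it maps derivations to derivations and is onto. It is injective because the
second grammar is uniquely readable: the `D` closing the arch is its first step from height `0`
to `-1`, and the `F`s separating `q, m₂, …, m_k` are its flat steps at height `0`.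
-/

open List

theorem List.getElem?_length_add_append {α : Type*} {a b : List α} (p : ℕ) :
    (a ++ b)[a.length + p]? = b[p]? := by
  simp [getElem?_append_right]

theorem List.flatten_intersperse_cons {α : Type*} (sep a : List α) (l : List (List α)) :
    (intersperse sep (a :: l)).flatten = a ++ l.flatMap (sep ++ ·) := by
  induction l generalizing a with
  | nil => simp
  | cons b l ih => simp [ih]

theorem List.eq_of_map_eq_of_injOn {α β : Type*} {f : α → β} {l l' : List α}
    (hf : ∀ a ∈ l, ∀ a' ∈ l', f a = f a' → a = a') (h : l.map f = l'.map f) : l = l' := by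
  induction l generalizing l' with
  | nil => simpa [eq_comm] using h
  | cons a l ih =>
    rcases l' with _ | ⟨a', l'⟩
    · simp at h
    rw [map_cons, map_cons, cons.injEq] at h
    rw [hf a mem_cons_self a' mem_cons_self h.1,
      ih (fun b hb b' hb' => hf b (mem_cons_of_mem _ hb) b' (mem_cons_of_mem _ hb')) h.2]

theorem List.exists_map_eq_of_forall_mem {α β : Type*} {f : α → β} {p : α → Prop} {l : List β}
    (h : ∀ b ∈ l, ∃ a, p a ∧ f a = b) : ∃ l' : List α, (∀ a ∈ l', p a) ∧ l'.map f = l := by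
  induction l with
  | nil => exact ⟨[], by simp, rfl⟩
  | cons b l ih =>
    rw [forall_mem_cons] at h
    obtain ⟨a, ha, rfl⟩ := h.1
    obtain ⟨l', hl', rfl⟩ := ih h.2
    exact ⟨a :: l', forall_mem_cons.2 ⟨ha, hl'⟩, rfl⟩

def IsLukasFrom (h : ℤ) (w : List ℤ) : Prop :=
  (∀ s ∈ w, -1 ≤ s) ∧ (∀ k, -h ≤ (w.take k).sum) ∧ w.sum = -h

theorem isLukasFrom_zero {w : List ℤ} : IsLukasFrom 0 w ↔ IsLukas w := by
  simp [IsLukasFrom, IsLukas]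

theorem isLukasFrom_nil {h : ℤ} : IsLukasFrom h [] ↔ h = 0 := by
  simp [IsLukasFrom]
  omega

theorem isLukas_nil : IsLukas [] :=
  isLukasFrom_zero.1 (isLukasFrom_nil.2 rfl)

theorem isLukasFrom_cons {h x : ℤ} {w : List ℤ} :
    IsLukasFrom h (x :: w) ↔ -1 ≤ x ∧ 0 ≤ h ∧ IsLukasFrom (h + x) w := by
  constructor
  · rintro ⟨hs, hp, hsum⟩
    refine ⟨hs x mem_cons_self, by simpa using hp 0, fun s hs' => hs s (mem_cons_of_mem _ hs'),
      fun k => ?_, ?_⟩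
    · have := hp (k + 1)
      simp only [take_succ_cons, sum_cons] at this
      linarith
    · simp only [sum_cons] at hsum
      linarith
  · rintro ⟨hx, hh, hs, hp, hsum⟩
    refine ⟨forall_mem_cons.2 ⟨hx, hs⟩, fun k => ?_, ?_⟩
    · rcases k with _ | k
      · simpa
      · simp only [take_succ_cons, sum_cons]
        linarith [hp k]
    · simp only [sum_cons]
      linarith

theorem isLukas_zero_cons {w : List ℤ} : IsLukas (0 :: w) ↔ IsLukas w := by
  simp [← isLukasFrom_zero, isLukasFrom_cons]

theorem IsLukasFrom.append {h h' : ℤ} {a b : List ℤ} (ha : IsLukasFrom h a)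
    (hb : IsLukasFrom h' b) (hh' : 0 ≤ h') : IsLukasFrom (h + h') (a ++ b) := by
  induction a generalizing h with
  | nil => rwa [isLukasFrom_nil.1 ha, zero_add]
  | cons x a ih =>
    obtain ⟨hx, hh, ha⟩ := isLukasFrom_cons.1 ha
    rw [cons_append, isLukasFrom_cons]
    exact ⟨hx, by omega, by simpa only [add_right_comm] using ih ha⟩

theorem IsLukasFrom.of_append {h : ℤ} {a b : List ℤ} (hw : IsLukasFrom h (a ++ b)) :
    IsLukasFrom (h + a.sum) b := by
  obtain ⟨hs, hp, hsum⟩ := hw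
  refine ⟨fun s hs' => hs s (mem_append_right _ hs'), fun k => ?_, ?_⟩
  · have := hp (a.length + k)
    rw [take_length_add_append, sum_append] at this
    linarith
  · rw [sum_append] at hsum
    linarith

theorem isLukas_append {a b : List ℤ} (ha : IsLukas a) (hb : IsLukas b) : IsLukas (a ++ b) :=
  isLukasFrom_zero.1 (by
    simpa using (isLukasFrom_zero.2 ha).append (isLukasFrom_zero.2 hb) le_rfl)

theorem isLukasFrom_flatMap {Ls : List (List ℤ)} (hLs : ∀ M ∈ Ls, IsLukas M) :
    IsLukasFrom Ls.length (Ls.flatMap (· ++ [-1])) := by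
  induction Ls with
  | nil => simp [isLukasFrom_nil]
  | cons M Ls ih =>
    have hM : IsLukasFrom 1 (M ++ [-1]) := by
      simpa using (isLukasFrom_zero.2 (hLs M mem_cons_self)).append
        (isLukasFrom_cons.2 ⟨le_rfl, zero_le_one, isLukasFrom_nil.2 (by norm_num)⟩) zero_le_one
    rw [flatMap_cons, length_cons, Nat.cast_succ, add_comm]
    exact hM.append (ih fun M' hM' => hLs M' (mem_cons_of_mem _ hM')) (by positivity)

theorem IsLukasFrom.exists_first_return {h : ℤ} {B : List ℤ} (hB : IsLukasFrom (h + 1) B)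
    (hh : 0 ≤ h) : ∃ a t, B = a ++ -1 :: t ∧ IsLukas a ∧ IsLukasFrom h t := by
  classical
  have hex : ∃ i, (B.take (i + 1)).sum < 0 :=
    ⟨B.length, by rw [take_of_length_le (by omega), hB.2.2]; omega⟩
  set i := Nat.find hex
  have hmin : ∀ j ≤ i, 0 ≤ (B.take j).sum := by
    rintro (_ | j) hj
    · simp
    · exact not_lt.1 (Nat.find_min hex (by omega))
  have hlt : i < B.length := by
    by_contra hc
    have h1 := Nat.find_spec hex
    have h2 := hmin i le_rfl
    rw [take_of_length_le (by omega)] at h1 h2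
    linarith
  have hstep : (B.take (i + 1)).sum = (B.take i).sum + B[i] := sum_take_succ B i hlt
  have hBi : -1 ≤ B[i] := hB.1 _ (getElem_mem hlt)
  have hneg : B[i] = -1 := by linarith [hmin i le_rfl, Nat.find_spec hex]
  have hzero : (B.take i).sum = 0 := by linarith [hmin i le_rfl, Nat.find_spec hex]
  have hsplit : B = B.take i ++ -1 :: B.drop (i + 1) := by
    rw [← hneg, ← drop_eq_getElem_cons hlt, take_append_drop]
  refine ⟨_, _, hsplit, ⟨fun s hs => hB.1 s (mem_of_mem_take hs), fun k => ?_, hzero⟩, ?_⟩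
  · rw [take_take]
    exact hmin _ (min_le_right _ _)
  · rw [hsplit] at hB
    simpa [hzero] using hB.of_append.of_append (a := [-1])

theorem IsLukasFrom.exists_flatMap_append :
    ∀ (k : ℕ) {B : List ℤ}, IsLukasFrom k B → ∃ (Ls : List (List ℤ)) (L : List ℤ),
      Ls.length = k ∧ (∀ M ∈ Ls, IsLukas M) ∧ IsLukas L ∧ B = Ls.flatMap (· ++ [-1]) ++ L
  | 0, B, hB => ⟨[], B, rfl, by simp, isLukasFrom_zero.1 (by simpa using hB), rfl⟩
  | k + 1, B, hB => by
    obtain ⟨a, t, rfl, ha, ht⟩ := exists_first_return (by simpa using hB) k.cast_nonneg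
    obtain ⟨Ls, L, hlen, hLs, hL, rfl⟩ := exists_flatMap_append k ht
    exact ⟨a :: Ls, L, by simp [hlen], forall_mem_cons.2 ⟨ha, hLs⟩, hL, by simp⟩

theorem IsLukas.getLast_nonpos {w : List ℤ} (hw : IsLukas w) : ∀ x ∈ w.getLast?, x ≤ 0 := by
  intro x hx
  obtain ⟨v, rfl⟩ := getLast?_eq_some_iff.1 hx
  have h1 := hw.2.1 v.length
  have h2 := hw.2.2
  rw [take_left' rfl] at h1
  rw [sum_append, sum_singleton] at h2
  linarith

/-- A Łukasiewicz path has no step from height `0` to `-1`, so the displayed `-1` is the first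
one. -/
theorem IsLukas.append_neg_one_cons_inj {a a' b b' : List ℤ} (ha : IsLukas a) (ha' : IsLukas a')
    (h : a ++ -1 :: b = a' ++ -1 :: b') : a = a' ∧ b = b' := by
  wlog hle : a.length ≤ a'.length generalizing a a' b b'
  · obtain ⟨h1, h2⟩ := this ha' ha h.symm (by omega)
    exact ⟨h1.symm, h2.symm⟩
  obtain ⟨r, rfl⟩ := prefix_of_prefix_length_le (h ▸ prefix_append a _) (prefix_append a' _) hle
  rcases r with _ | ⟨y, r⟩
  · simpa using h
  · obtain rfl : y = -1 := (by simpa using h : -1 = y ∧ _).1.symm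
    have := ha'.2.1 (a.length + 1)
    rw [take_length_add_append] at this
    simp [ha.2.2] at this

theorem upThenFlat_nil : UpThenFlat [] := by
  intro j s h
  simp at h

theorem upThenFlat_cons {x : ℤ} {l : List ℤ} :
    UpThenFlat (x :: l) ↔ (1 ≤ x → l[0]? = some 0) ∧ UpThenFlat l := by
  constructor
  · intro h
    exact ⟨fun hx => by simpa using h 0 x rfl hx,
      fun j s hj hs => by simpa using h (j + 1) s (by simpa using hj) hs⟩
  · rintro ⟨h0, hl⟩ (_ | j) s hj hs
    · simp only [getElem?_cons_zero, Option.some.injEq] at hj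
      subst hj
      simpa using h0 hs
    · simpa using hl j s (by simpa using hj) hs

theorem upThenFlat_append {a b : List ℤ} (ha : ∀ x ∈ a.getLast?, x ≤ 0) :
    UpThenFlat (a ++ b) ↔ UpThenFlat a ∧ UpThenFlat b := by
  induction a with
  | nil => simp [upThenFlat_nil]
  | cons x a ih =>
    rcases a with _ | ⟨y, a⟩
    · have hx : x ≤ 0 := ha x rfl
      simp [upThenFlat_cons, upThenFlat_nil, show ¬ 1 ≤ x by omega]
    · simp only [cons_append, upThenFlat_cons, getElem?_cons_zero] at ih ⊢
      rw [ih (by simpa using ha)]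
      simp only [and_assoc]

theorem UpThenFlat.getLast_nonpos {w : List ℤ} (hw : UpThenFlat w) : ∀ x ∈ w.getLast?, x ≤ 0 := by
  intro x hx
  rw [getLast?_eq_getElem?] at hx
  have hlen : w.length - 1 < w.length := (List.getElem?_eq_some_iff.1 hx).1
  by_contra hpos
  have := hw _ x hx (by omega)
  rw [getElem?_eq_none (by omega)] at this
  simp at this

theorem UpThenFlat.append {a b : List ℤ} (ha : UpThenFlat a) (hb : UpThenFlat b) :
    UpThenFlat (a ++ b) :=
  (upThenFlat_append ha.getLast_nonpos).2 ⟨ha, hb⟩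

theorem upThenFlat_append_neg_one_cons {M r : List ℤ} (hM : IsLukas M) :
    UpThenFlat (M ++ -1 :: r) ↔ UpThenFlat M ∧ UpThenFlat r := by
  rw [upThenFlat_append hM.getLast_nonpos, upThenFlat_cons]
  simp

theorem upThenFlat_flatMap_append {Ls : List (List ℤ)} {L : List ℤ}
    (hLs : ∀ M ∈ Ls, IsLukas M) :
    UpThenFlat (Ls.flatMap (· ++ [-1]) ++ L) ↔ (∀ M ∈ Ls, UpThenFlat M) ∧ UpThenFlat L := by
  induction Ls with
  | nil => simp
  | cons M Ls ih =>
    rw [forall_mem_cons] at hLs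
    rw [flatMap_cons, append_assoc, append_assoc, singleton_append,
      upThenFlat_append_neg_one_cons hLs.1, ih hLs.2, forall_mem_cons, and_assoc]

def FlatsAfterUpAbove (c : ℤ) (w : List ℤ) : Prop :=
  ∀ j, w[j]? = some 0 → c < (w.take j).sum → ∃ i, j = i + 1 ∧ ∃ s, w[i]? = some s ∧ 1 ≤ s

theorem flatsAfterUpAbove_zero {w : List ℤ} :
    FlatsAfterUpAbove 0 w ↔ FlatPosHeightAfterUp w := by
  constructor
  · intro h j hj hc
    obtain ⟨i, hi, hs⟩ := h (j + 1) hj hc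
    exact (Nat.succ_injective hi).symm ▸ hs
  · rintro h (_ | j) hj hc
    · simp at hc
    · exact ⟨j, rfl, h j hj hc⟩

theorem flatsAfterUpAbove_nil {c : ℤ} : FlatsAfterUpAbove c [] := by
  intro j hj
  simp at hj

theorem flatsAfterUpAbove_singleton {c x : ℤ} (hx : x ≠ 0) : FlatsAfterUpAbove c [x] := by
  rintro (_ | j) hj
  · exact absurd (by simpa using hj) hx
  · simp at hj

theorem FlatsAfterUpAbove.mono {c c' : ℤ} {w : List ℤ} (hcc' : c ≤ c')
    (h : FlatsAfterUpAbove c w) : FlatsAfterUpAbove c' w :=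
  fun j hj hc => h j hj (by linarith)

theorem IsLukas.flatsAfterUpAbove_iff {c : ℤ} {w : List ℤ} (hw : IsLukas w) (hc : c < 0) :
    FlatsAfterUpAbove c w ↔ FlatsAfterUpAbove (-1) w :=
  ⟨fun h => h.mono (by omega), fun h j hj _ => h j hj (by linarith [hw.2.1 j])⟩

theorem FlatsAfterUpAbove.append {c : ℤ} {a b : List ℤ} (ha : FlatsAfterUpAbove c a)
    (hb : FlatsAfterUpAbove (c - a.sum) b) : FlatsAfterUpAbove c (a ++ b) := by
  intro j hj hc
  rcases lt_or_ge j a.length with hja | hja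
  · rw [getElem?_append_left hja] at hj
    rw [take_append_of_le_length hja.le] at hc
    obtain ⟨i, rfl, s, hs, hs1⟩ := ha _ hj hc
    exact ⟨i, rfl, s, by rwa [getElem?_append_left (by omega)], hs1⟩
  · obtain ⟨p, rfl⟩ := Nat.exists_eq_add_of_le hja
    rw [getElem?_length_add_append] at hj
    rw [take_length_add_append, sum_append] at hc
    obtain ⟨i, rfl, s, hs, hs1⟩ := hb p hj (by linarith)
    exact ⟨a.length + i, rfl, s, by rwa [getElem?_length_add_append], hs1⟩

theorem FlatsAfterUpAbove.of_append_left {c : ℤ} {a b : List ℤ}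
    (h : FlatsAfterUpAbove c (a ++ b)) : FlatsAfterUpAbove c a := by
  intro j hj hc
  have hja : j < a.length := (List.getElem?_eq_some_iff.1 hj).1
  obtain ⟨i, rfl, s, hs, hs1⟩ :=
    h j (by rwa [getElem?_append_left hja]) (by rwa [take_append_of_le_length hja.le])
  exact ⟨i, rfl, s, by rwa [getElem?_append_left (by omega)] at hs, hs1⟩

theorem FlatsAfterUpAbove.of_append_right {c : ℤ} {a b : List ℤ}
    (ha : ∀ x ∈ a.getLast?, x ≤ 0) (h : FlatsAfterUpAbove c (a ++ b)) :
    FlatsAfterUpAbove (c - a.sum) b := by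
  intro p hp hc
  obtain ⟨i, hi, s, hs, hs1⟩ := h (a.length + p) (by rwa [getElem?_length_add_append])
    (by rw [take_length_add_append, sum_append]; linarith)
  rcases p with _ | p
  · rw [getElem?_append_left (by omega)] at hs
    have := ha s (by rwa [getLast?_eq_getElem?, show a.length - 1 = i by omega])
    omega
  · refine ⟨p, rfl, s, ?_, hs1⟩
    rwa [show i = a.length + p by omega, getElem?_length_add_append] at hs

theorem flatsAfterUpAbove_append {c : ℤ} {a b : List ℤ} (ha : ∀ x ∈ a.getLast?, x ≤ 0) :
    FlatsAfterUpAbove c (a ++ b) ↔ FlatsAfterUpAbove c a ∧ FlatsAfterUpAbove (c - a.sum) b :=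
  ⟨fun h => ⟨h.of_append_left, h.of_append_right ha⟩, fun h => h.1.append h.2⟩

theorem flatsAfterUpAbove_append_neg_one_cons {c : ℤ} {M r : List ℤ} (hM : IsLukas M) :
    FlatsAfterUpAbove c (M ++ -1 :: r) ↔ FlatsAfterUpAbove c M ∧ FlatsAfterUpAbove (c + 1) r := by
  rw [flatsAfterUpAbove_append hM.getLast_nonpos, hM.2.2, sub_zero, ← singleton_append,
    flatsAfterUpAbove_append (by simp), sum_singleton, sub_neg_eq_add]
  simp [flatsAfterUpAbove_singleton]

theorem flatsAfterUpAbove_flatMap_append {c : ℤ} {Ls : List (List ℤ)} {L : List ℤ} (hc : c ≤ 0)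
    (hLs : ∀ M ∈ Ls, IsLukas M) :
    FlatsAfterUpAbove (c - Ls.length) (Ls.flatMap (· ++ [-1]) ++ L) ↔
      (∀ M ∈ Ls, FlatsAfterUpAbove (-1) M) ∧ FlatsAfterUpAbove c L := by
  induction Ls with
  | nil => simp
  | cons M Ls ih =>
    rw [forall_mem_cons] at hLs
    rw [flatMap_cons, append_assoc, append_assoc, singleton_append,
      flatsAfterUpAbove_append_neg_one_cons hLs.1, hLs.1.flatsAfterUpAbove_iff (by simp; omega),
      length_cons, Nat.cast_succ, show c - (Ls.length + 1) + 1 = c - Ls.length by ring,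
      ih hLs.2, forall_mem_cons, and_assoc]

/-- The arch `U_k F C D M₂ D ⋯ M_k D L` with `k = Cs.length + 1` and `Cs = [M₂, …, M_k]`. -/
def lukArch (C : List ℤ) (Cs : List (List ℤ)) (L : List ℤ) : List ℤ :=
  ((Cs.length : ℤ) + 1) :: 0 :: (C ++ -1 :: (Cs.flatMap (· ++ [-1]) ++ L))

section lukArch

variable {C L : List ℤ} {Cs : List (List ℤ)}

theorem isLukas_lukArch (hC : IsLukas C) (hCs : ∀ M ∈ Cs, IsLukas M) (hL : IsLukas L) :
    IsLukas (lukArch C Cs L) := by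
  have hrest : IsLukasFrom Cs.length (Cs.flatMap (· ++ [-1]) ++ L) := by
    simpa using (isLukasFrom_flatMap hCs).append (isLukasFrom_zero.2 hL) le_rfl
  rw [← isLukasFrom_zero, lukArch, isLukasFrom_cons, isLukasFrom_cons]
  refine ⟨by omega, le_rfl, by norm_num, by positivity, ?_⟩
  simpa using (isLukasFrom_zero.2 hC).append
    (isLukasFrom_cons.2 ⟨le_rfl, by positivity, by simpa using hrest⟩) (by positivity)

theorem upThenFlat_lukArch (hC : IsLukas C) (hCs : ∀ M ∈ Cs, IsLukas M) :
    UpThenFlat (lukArch C Cs L) ↔ UpThenFlat C ∧ (∀ M ∈ Cs, UpThenFlat M) ∧ UpThenFlat L := by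
  rw [lukArch, upThenFlat_cons, upThenFlat_cons, upThenFlat_append_neg_one_cons hC,
    upThenFlat_flatMap_append hCs]
  simp

theorem flatsAfterUpAbove_lukArch {c : ℤ} (hc : c ≤ 0) (hC : IsLukas C)
    (hCs : ∀ M ∈ Cs, IsLukas M) :
    FlatsAfterUpAbove c (lukArch C Cs L) ↔ FlatsAfterUpAbove (-1) C ∧
      (∀ M ∈ Cs, FlatsAfterUpAbove (-1) M) ∧ FlatsAfterUpAbove c L := by
  have hhead : FlatsAfterUpAbove c [(Cs.length : ℤ) + 1, 0] := by
    rintro (_ | _ | j) hj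
    · simp at hj
      omega
    · exact fun _ => ⟨0, rfl, _, rfl, by simp⟩
    · simp at hj
  rw [show lukArch C Cs L = [(Cs.length : ℤ) + 1, 0] ++ (C ++ -1 :: (Cs.flatMap (· ++ [-1]) ++ L))
      from rfl, flatsAfterUpAbove_append (by simp), flatsAfterUpAbove_append_neg_one_cons hC,
    hC.flatsAfterUpAbove_iff (by simp; omega), ← flatsAfterUpAbove_flatMap_append hc hCs]
  simp only [sum_cons, sum_nil, hhead, true_and]
  ring_nf

theorem length_lt_length_lukArch {M : List ℤ} (hM : M = C ∨ M ∈ Cs ∨ M = L) :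
    M.length < (lukArch C Cs L).length := by
  have hCs : ∀ M ∈ Cs, M.length ≤ (Cs.flatMap (· ++ [-1])).length := fun M hM =>
    (infix_of_mem_flatten (mem_map_of_mem (f := (· ++ [-1])) hM)).length_le.trans' (by simp)
  simp only [lukArch, length_cons, length_append]
  rcases hM with rfl | hM | rfl
  · omega
  · have := hCs M hM
    omega
  · omega

end lukArch

theorem exists_eq_lukArch {x : ℤ} {r : List ℤ} (hw : IsLukas (x :: r))
    (hU : UpThenFlat (x :: r)) (hx : 1 ≤ x) :
    ∃ C Cs L, x :: r = lukArch C Cs L ∧ IsLukas C ∧ (∀ M ∈ Cs, IsLukas M) ∧ IsLukas L := by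
  obtain ⟨k, rfl⟩ := Int.eq_ofNat_of_zero_le (by omega : 0 ≤ x)
  obtain ⟨-, -, hr⟩ := isLukasFrom_cons.1 (isLukasFrom_zero.2 hw)
  obtain ⟨_ | ⟨L₁, Cs⟩, L, hlen, hLs, hL, rfl⟩ :=
    IsLukasFrom.exists_flatMap_append k (by simpa using hr)
  · simp at hlen
    omega
  have hfirst := (upThenFlat_cons.1 hU).1 hx
  rcases L₁ with _ | ⟨y, C⟩
  · simp at hfirst
  obtain rfl : y = 0 := by simpa using hfirst
  refine ⟨C, Cs, L, ?_, isLukas_zero_cons.1 (hLs _ mem_cons_self),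
    fun M hM => hLs M (mem_cons_of_mem _ hM), hL⟩
  simp [lukArch, ← hlen]

/-- Derivations in an unambiguous grammar of the paths of `E`; `b` says whether flat steps at
height `0` are allowed, and the components `C` and `Cs` of an arch, which lie at positive height,
are derived with `b = false`. -/
inductive EPath : Bool → List ℤ → Prop
  | nil (b : Bool) : EPath b []
  | flat {L : List ℤ} : EPath true L → EPath true (0 :: L)
  | arch (b : Bool) {C : List ℤ} {Cs : List (List ℤ)} {L : List ℤ} :
      EPath false C → (∀ M ∈ Cs, EPath false M) → EPath b L →
      EPath b (lukArch C Cs L)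

theorem EPath.isLukas_upThenFlat_flatsAfterUpAbove {b : Bool} {w : List ℤ}
    (hw : EPath b w) :
    IsLukas w ∧ UpThenFlat w ∧ FlatsAfterUpAbove (if b then 0 else -1) w := by
  induction hw with
  | nil b => exact ⟨isLukas_nil, upThenFlat_nil, flatsAfterUpAbove_nil⟩
  | flat _ ih =>
    obtain ⟨hL, hU, hF⟩ := ih
    refine ⟨isLukas_zero_cons.2 hL, upThenFlat_cons.2 ⟨by simp, hU⟩, ?_⟩
    rw [← singleton_append, flatsAfterUpAbove_append (by simp)]
    exact ⟨fun j _ h => absurd h (by rcases j with _ | j <;> simp), by simpa using hF⟩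
  | arch b _ _ _ ihC ihCs ihL =>
    have hCs : ∀ M ∈ _, IsLukas M := fun M hM => (ihCs M hM).1
    refine ⟨isLukas_lukArch ihC.1 hCs ihL.1,
      (upThenFlat_lukArch ihC.1 hCs).2 ⟨ihC.2.1, fun M hM => (ihCs M hM).2.1, ihL.2.1⟩,
      (flatsAfterUpAbove_lukArch (by split <;> norm_num) ihC.1 hCs).2
        ⟨ihC.2.2, fun M hM => (ihCs M hM).2.2, ihL.2.2⟩⟩

theorem EPath.isLukas {b : Bool} {w : List ℤ} (hw : EPath b w) : IsLukas w :=
  hw.isLukas_upThenFlat_flatsAfterUpAbove.1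

theorem ePath_of_isLukas {b : Bool} {w : List ℤ} (hL : IsLukas w) (hU : UpThenFlat w)
    (hF : FlatsAfterUpAbove (if b then 0 else -1) w) : EPath b w := by
  obtain ⟨n, hn⟩ : ∃ n, w.length = n := ⟨_, rfl⟩
  induction n using Nat.strong_induction_on generalizing w b with
  | _ n ih =>
  rcases w with _ | ⟨x, r⟩
  · exact .nil b
  have hx : 0 ≤ x := by simpa using hL.2.1 1
  rcases hx.eq_or_lt with rfl | hx
  · cases b
    · obtain ⟨i, hi, -⟩ := hF 0 rfl (by simp)
      omega
    · have hF' := ((flatsAfterUpAbove_append (a := [0]) (by simp)).1 hF).2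
      exact .flat (ih _ (by simp [← hn]) (isLukas_zero_cons.1 hL) (upThenFlat_cons.1 hU).2
        (by simpa using hF') rfl)
  obtain ⟨C, Cs, L, hw, hC, hCs, hL'⟩ := exists_eq_lukArch hL hU hx
  rw [hw] at hU hF hn ⊢
  obtain ⟨hUC, hUCs, hUL⟩ := (upThenFlat_lukArch hC hCs).1 hU
  obtain ⟨hFC, hFCs, hFL⟩ := (flatsAfterUpAbove_lukArch (by split <;> norm_num) hC hCs).1 hF
  exact .arch b (ih _ (hn ▸ length_lt_length_lukArch (.inl rfl)) hC hUC hFC rfl)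
    (fun M hM => ih _ (hn ▸ length_lt_length_lukArch (.inr (.inl hM))) (hCs M hM) (hUCs M hM)
      (hFCs M hM) rfl)
    (ih _ (hn ▸ length_lt_length_lukArch (.inr (.inr rfl))) hL' hUL hFL rfl)

/-- The arch `U F q F m₁ ⋯ F m_j D t` with `qs = [m₁, …, m_j]`. -/
def motzArch (q : List ℤ) (qs : List (List ℤ)) (t : List ℤ) : List ℤ :=
  1 :: 0 :: (q ++ qs.flatMap (0 :: ·) ++ -1 :: t)

theorem motzArch_eq_lukArch {q t : List ℤ} {qs : List (List ℤ)} :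
    motzArch q qs t = lukArch (q ++ qs.flatMap (0 :: ·)) [] t := by
  simp [motzArch, lukArch]

/-- Derivations in an unambiguous grammar of the Motzkin paths avoiding `UU` and `UD`; `b` says
whether flat steps at height `0` are allowed. -/
inductive AvoidingPath : Bool → List ℤ → Prop
  | nil (b : Bool) : AvoidingPath b []
  | flat {t : List ℤ} : AvoidingPath true t → AvoidingPath true (0 :: t)
  | arch (b : Bool) {q : List ℤ} {qs : List (List ℤ)} {t : List ℤ} :
      AvoidingPath false q → (∀ m ∈ qs, AvoidingPath false m) → AvoidingPath b t →
      AvoidingPath b (motzArch q qs t)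

theorem isMotzkin_upThenFlat_flatMap_zero_cons {qs : List (List ℤ)}
    (h : ∀ m ∈ qs, IsMotzkin m ∧ UpThenFlat m) :
    IsMotzkin (qs.flatMap (0 :: ·)) ∧ UpThenFlat (qs.flatMap (0 :: ·)) := by
  induction qs with
  | nil => exact ⟨⟨isLukas_nil, by simp⟩, upThenFlat_nil⟩
  | cons m qs ih =>
    rw [forall_mem_cons] at h
    obtain ⟨⟨⟨hL, hle⟩, hU⟩, h⟩ := h
    obtain ⟨⟨hL', hle'⟩, hU'⟩ := ih h
    refine ⟨⟨isLukas_append (isLukas_zero_cons.2 hL) hL', ?_⟩, ?_⟩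
    · simp only [flatMap_cons, mem_append, mem_cons]
      rintro s ((rfl | hs) | hs)
      exacts [zero_le_one, hle s hs, hle' s hs]
    · exact (upThenFlat_cons.2 ⟨by simp, hU⟩).append hU'

theorem AvoidingPath.isMotzkin_upThenFlat {b : Bool} {t : List ℤ} (ht : AvoidingPath b t) :
    IsMotzkin t ∧ UpThenFlat t := by
  induction ht with
  | nil b => exact ⟨⟨isLukas_nil, by simp⟩, upThenFlat_nil⟩
  | flat _ ih =>
    obtain ⟨⟨hL, hle⟩, hU⟩ := ih
    exact ⟨⟨isLukas_zero_cons.2 hL, forall_mem_cons.2 ⟨zero_le_one, hle⟩⟩,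
      upThenFlat_cons.2 ⟨by simp, hU⟩⟩
  | @arch b q qs t _ _ _ ihq ihqs iht =>
    obtain ⟨⟨hqL, hqle⟩, hqU⟩ := ihq
    obtain ⟨⟨hsL, hsle⟩, hsU⟩ := isMotzkin_upThenFlat_flatMap_zero_cons ihqs
    obtain ⟨⟨htL, htle⟩, htU⟩ := iht
    have hle : ∀ s ∈ motzArch q qs t, s ≤ 1 := by
      simp only [motzArch, mem_cons, mem_append]
      rintro s (rfl | rfl | (hs | hs) | rfl | hs)
      exacts [le_rfl, zero_le_one, hqle s hs, hsle s hs, by norm_num, htle s hs]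
    have hv := isLukas_append hqL hsL
    rw [motzArch_eq_lukArch] at hle ⊢
    exact ⟨⟨isLukas_lukArch hv (by simp) htL, hle⟩,
      (upThenFlat_lukArch hv (by simp)).2 ⟨hqU.append hsU, by simp, htU⟩⟩

theorem isLukas_append_flatMap_zero_cons {b b' : Bool} {q : List ℤ} {qs : List (List ℤ)}
    (hq : AvoidingPath b q) (hqs : ∀ m ∈ qs, AvoidingPath b' m) :
    IsLukas (q ++ qs.flatMap (0 :: ·)) :=
  isLukas_append hq.isMotzkin_upThenFlat.1.1 (isMotzkin_upThenFlat_flatMap_zero_cons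
    fun m hm => (hqs m hm).isMotzkin_upThenFlat).1.1

theorem AvoidingPath.exists_eq_append_flatMap {b : Bool} {v : List ℤ} (hv : AvoidingPath b v) :
    ∃ (q : List ℤ) (qs : List (List ℤ)), AvoidingPath false q ∧
      (∀ m ∈ qs, AvoidingPath false m) ∧ v = q ++ qs.flatMap (0 :: ·) := by
  induction hv with
  | nil b => exact ⟨[], [], .nil false, by simp, rfl⟩
  | flat _ ih =>
    obtain ⟨q, qs, hq, hqs, rfl⟩ := ih
    exact ⟨[], q :: qs, .nil false, forall_mem_cons.2 ⟨hq, hqs⟩, by simp⟩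
  | arch b hq₁ hqs₁ _ _ _ ih =>
    obtain ⟨q, qs, hq, hqs, rfl⟩ := ih
    exact ⟨_, qs, .arch false hq₁ hqs₁ hq, hqs, by simp [motzArch]⟩

theorem avoidingPath_of_isMotzkin {t : List ℤ} (ht : IsMotzkin t) (hU : UpThenFlat t) :
    AvoidingPath true t := by
  obtain ⟨n, hn⟩ : ∃ n, t.length = n := ⟨_, rfl⟩
  induction n using Nat.strong_induction_on generalizing t with
  | _ n ih =>
  rcases t with _ | ⟨x, r⟩
  · exact .nil true
  have hx : 0 ≤ x := by simpa using ht.1.2.1 1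
  rcases hx.eq_or_lt with rfl | hx
  · exact .flat (ih _ (by simp [← hn]) ⟨isLukas_zero_cons.1 ht.1, fun s hs => ht.2 s
      (mem_cons_of_mem _ hs)⟩ (upThenFlat_cons.1 hU).2 rfl)
  obtain ⟨C, Cs, L, hw, hC, hCs, hL⟩ := exists_eq_lukArch ht.1 hU hx
  obtain rfl : Cs = [] := by
    have := ht.2 x mem_cons_self
    rw [← length_eq_zero_iff]
    simp [lukArch] at hw
    omega
  rw [hw] at ht hU hn ⊢
  obtain ⟨hUC, -, hUL⟩ := (upThenFlat_lukArch hC hCs).1 hU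
  have hle : ∀ s ∈ C ++ L, s ≤ 1 := fun s hs => ht.2 s (by simp [lukArch] at hs ⊢; tauto)
  obtain ⟨q, qs, hq, hqs, rfl⟩ := (ih _ (hn ▸ length_lt_length_lukArch (.inl rfl))
    ⟨hC, fun s hs => hle s (mem_append_left _ hs)⟩ hUC rfl).exists_eq_append_flatMap
  rw [← motzArch_eq_lukArch]
  exact .arch true hq hqs (ih _ (hn ▸ length_lt_length_lukArch (.inr (.inr rfl)))
    ⟨hL, fun s hs => hle s (mem_append_right _ hs)⟩ hUL rfl)

/-- `q` has no flat step at height `0`, so the displayed `0` is the first one. -/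
theorem AvoidingPath.append_zero_cons_inj {b : Bool} {q q' r r' : List ℤ}
    (hq : AvoidingPath b q) (hb : b = false) (hq' : AvoidingPath false q')
    (h : q ++ 0 :: r = q' ++ 0 :: r') : q = q' ∧ r = r' := by
  induction hq generalizing q' with
  | nil =>
    cases hq' with
    | nil => simpa using h
    | arch => simp [motzArch] at h
  | flat => simp at hb
  | @arch b q₁ qs₁ t hq₁ hqs₁ ht _ _ ih =>
    cases hq' with
    | nil => simp [motzArch] at h
    | @arch _ q₁' qs₁' t' hq₁' hqs₁' ht' =>
      have h' : (q₁ ++ qs₁.flatMap (0 :: ·)) ++ -1 :: (t ++ 0 :: r) =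
          (q₁' ++ qs₁'.flatMap (0 :: ·)) ++ -1 :: (t' ++ 0 :: r') := by
        simpa [motzArch] using h
      obtain ⟨hv, htr⟩ := IsLukas.append_neg_one_cons_inj
        (isLukas_append_flatMap_zero_cons hq₁ hqs₁) (isLukas_append_flatMap_zero_cons hq₁' hqs₁') h'
      obtain ⟨rfl, rfl⟩ := ih hb ht' htr
      exact ⟨by simp only [motzArch, hv], rfl⟩

theorem flatMap_append_zero_inj {qs qs' : List (List ℤ)} (hqs : ∀ m ∈ qs, AvoidingPath false m)
    (hqs' : ∀ m ∈ qs', AvoidingPath false m)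
    (h : qs.flatMap (· ++ [0]) = qs'.flatMap (· ++ [0])) : qs = qs' := by
  induction qs generalizing qs' with
  | nil => cases qs' <;> simp_all
  | cons m qs ih =>
    rcases qs' with _ | ⟨m', qs'⟩
    · simp at h
    rw [forall_mem_cons] at hqs hqs'
    simp only [flatMap_cons, append_assoc, singleton_append] at h
    obtain ⟨rfl, hrest⟩ := hqs.1.append_zero_cons_inj rfl hqs'.1 h
    rw [ih hqs.2 hqs'.2 hrest]

theorem append_flatMap_zero_cons_append_zero (q : List ℤ) (qs : List (List ℤ)) :
    q ++ qs.flatMap (0 :: ·) ++ [0] = (q :: qs).flatMap (· ++ [0]) := by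
  induction qs generalizing q with
  | nil => simp
  | cons m qs ih => simp [← ih m]

theorem motzArch_inj {q q' t t' : List ℤ} {qs qs' : List (List ℤ)} (hq : AvoidingPath false q)
    (hqs : ∀ m ∈ qs, AvoidingPath false m) (hq' : AvoidingPath false q')
    (hqs' : ∀ m ∈ qs', AvoidingPath false m) (h : motzArch q qs t = motzArch q' qs' t') :
    q = q' ∧ qs = qs' ∧ t = t' := by
  have h' : (q ++ qs.flatMap (0 :: ·)) ++ -1 :: t = (q' ++ qs'.flatMap (0 :: ·)) ++ -1 :: t' := by
    simpa [motzArch] using h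
  obtain ⟨hv, rfl⟩ := IsLukas.append_neg_one_cons_inj (isLukas_append_flatMap_zero_cons hq hqs)
    (isLukas_append_flatMap_zero_cons hq' hqs') h'
  have := congrArg (· ++ [0]) hv
  simp only [append_flatMap_zero_cons_append_zero] at this
  simpa using flatMap_append_zero_inj (forall_mem_cons.2 ⟨hq, hqs⟩)
    (forall_mem_cons.2 ⟨hq', hqs'⟩) this

theorem PsiEquations.apply_lukArch {ψ : List ℤ → List ℤ} (hψ : PsiEquations ψ) {C L : List ℤ}
    {Cs : List (List ℤ)} (hC : IsLukas C) (hCs : ∀ M ∈ Cs, IsLukas M) (hL : IsLukas L) :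
    ψ (lukArch C Cs L) = motzArch (ψ C) (Cs.map ψ) (ψ L) := by
  have := hψ.2.2 ((0 :: C) :: Cs) L (cons_ne_nil _ _)
    (forall_mem_cons.2 ⟨isLukas_zero_cons.2 hC, hCs⟩) hL
  simp only [map_cons, flatten_intersperse_cons, hψ.2.1 C hC] at this
  simpa [lukArch, motzArch, flatMap_map, flatMap_def] using this

section psi

variable {ψ : List ℤ → List ℤ} (hψ : PsiEquations ψ)
include hψ

theorem EPath.psi_zero_cons {L : List ℤ} (hL : EPath true L) : ψ (0 :: L) = 0 :: ψ L :=
  hψ.2.1 L hL.isLukas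

theorem EPath.psi_lukArch {b : Bool} {C L : List ℤ} {Cs : List (List ℤ)}
    (hC : EPath false C) (hCs : ∀ M ∈ Cs, EPath false M) (hL : EPath b L) :
    ψ (lukArch C Cs L) = motzArch (ψ C) (Cs.map ψ) (ψ L) :=
  hψ.apply_lukArch hC.isLukas (fun M hM => (hCs M hM).isLukas) hL.isLukas

theorem EPath.avoidingPath_psi {b : Bool} {w : List ℤ} (hw : EPath b w) :
    AvoidingPath b (ψ w) ∧ (ψ w).length = w.length := by
  induction hw with
  | nil b =>
    rw [hψ.1]
    exact ⟨.nil b, rfl⟩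
  | flat hL ih =>
    rw [hL.psi_zero_cons hψ]
    exact ⟨.flat ih.1, by simp [ih.2]⟩
  | @arch b C Cs L hC hCs hL ihC ihCs ihL =>
    rw [hC.psi_lukArch hψ hCs hL]
    refine ⟨.arch b ihC.1 (forall_mem_map.2 fun M hM => (ihCs M hM).1) ihL.1, ?_⟩
    have hbody : ((Cs.map ψ).flatMap (0 :: ·)).length = (Cs.flatMap (· ++ [-1])).length := by
      simp only [length_flatMap, map_map]
      exact congrArg sum (map_congr_left fun M hM => by simp [(ihCs M hM).2])
    simp only [motzArch, lukArch, length_cons, length_append, hbody, ihC.2, ihL.2]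
    omega

theorem EPath.psi_inj {b : Bool} {w w' : List ℤ} (hw : EPath b w)
    (hw' : EPath b w') (h : ψ w = ψ w') : w = w' := by
  induction hw generalizing w' with
  | nil b =>
    cases hw' with
    | nil => rfl
    | flat hL => simp [hψ.1, hL.psi_zero_cons hψ] at h
    | arch _ hC hCs hL => simp [hψ.1, hC.psi_lukArch hψ hCs hL, motzArch] at h
  | flat hL ih =>
    cases hw' with
    | nil => simp [hψ.1, hL.psi_zero_cons hψ] at h
    | flat hL' =>
      rw [hL.psi_zero_cons hψ, hL'.psi_zero_cons hψ, cons.injEq] at h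
      rw [ih hL' h.2]
    | arch _ hC hCs hL' => simp [hL.psi_zero_cons hψ, hC.psi_lukArch hψ hCs hL', motzArch] at h
  | arch b hC hCs hL ihC ihCs ihL =>
    cases hw' with
    | nil => simp [hψ.1, hC.psi_lukArch hψ hCs hL, motzArch] at h
    | flat hL' => simp [hL'.psi_zero_cons hψ, hC.psi_lukArch hψ hCs hL, motzArch] at h
    | arch _ hC' hCs' hL' =>
      rw [hC.psi_lukArch hψ hCs hL, hC'.psi_lukArch hψ hCs' hL'] at h
      obtain ⟨h₁, h₂, h₃⟩ := motzArch_inj (hC.avoidingPath_psi hψ).1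
        (forall_mem_map.2 fun M hM => ((hCs M hM).avoidingPath_psi hψ).1)
        (hC'.avoidingPath_psi hψ).1
        (forall_mem_map.2 fun M hM => ((hCs' M hM).avoidingPath_psi hψ).1) h
      rw [ihC hC' h₁, ihL hL' h₃,
        List.eq_of_map_eq_of_injOn (fun M hM M' hM' => ihCs M hM (hCs' M' hM')) h₂]

theorem AvoidingPath.exists_psi_eq {b : Bool} {t : List ℤ} (ht : AvoidingPath b t) :
    ∃ w, EPath b w ∧ ψ w = t := by
  induction ht with
  | nil b => exact ⟨[], .nil b, hψ.1⟩
  | flat _ ih =>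
    obtain ⟨L, hL, rfl⟩ := ih
    exact ⟨0 :: L, .flat hL, hL.psi_zero_cons hψ⟩
  | arch b _ _ _ ihq ihqs iht =>
    obtain ⟨C, hC, rfl⟩ := ihq
    obtain ⟨Cs, hCs, rfl⟩ := List.exists_map_eq_of_forall_mem ihqs
    obtain ⟨L, hL, rfl⟩ := iht
    exact ⟨lukArch C Cs L, .arch b hC hCs hL, hC.psi_lukArch hψ hCs hL⟩

end psi

theorem IsMotzkin.upThenFlat_iff {w : List ℤ} (hw : IsMotzkin w) :
    UpThenFlat w ↔ AvoidsUU w ∧ AvoidsUD w := by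
  constructor
  · intro hU
    exact ⟨fun j h => by simp [hU j 1 h.1 le_rfl] at h, fun j h => by simp [hU j 1 h.1 le_rfl] at h⟩
  · rintro ⟨hUU, hUD⟩ j s hj hs
    obtain rfl : s = 1 := le_antisymm (hw.2 s (mem_of_getElem? hj)) hs
    cases hnext : w[j + 1]? with
    | none =>
      have hlast : w.getLast? = some 1 := by
        rw [getLast?_eq_getElem?, ← hj]
        congr 1
        have := (List.getElem?_eq_some_iff.1 hj).1
        have := getElem?_eq_none_iff.1 hnext
        omega
      simpa using hw.1.getLast_nonpos 1 hlast
    | some s' =>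
      have h1 : s' ≤ 1 := hw.2 s' (mem_of_getElem? hnext)
      have h2 : -1 ≤ s' := hw.1.1 s' (mem_of_getElem? hnext)
      have h3 : s' ≠ 1 := fun h => hUU j ⟨hj, h ▸ hnext⟩
      have h4 : s' ≠ -1 := fun h => hUD j ⟨hj, h ▸ hnext⟩
      congr 1
      omega

/-- `ψ` restricts to a bijection from the set `E_n` of Łukasiewicz paths of
length `n` in which every up step is immediately followed by a flat step and
every flat step at positive height is immediately preceded by an up step, onto
the set of Motzkin paths of length `n` avoiding `UU` and `UD`. -/
theorem psi_bij_E_to_avoidUU_UD (ψ : List ℤ → List ℤ) (hψ : PsiEquations ψ) (n : ℕ) :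
    Set.BijOn ψ
      {w : List ℤ | IsLukas w ∧ UpThenFlat w ∧ FlatPosHeightAfterUp w ∧ w.length = n}
      {w : List ℤ | IsMotzkin w ∧ AvoidsUU w ∧ AvoidsUD w ∧ w.length = n} := by
  have hE {w : List ℤ} (hL : IsLukas w) (hU : UpThenFlat w) (hF : FlatPosHeightAfterUp w) :
      EPath true w :=
    ePath_of_isLukas hL hU (flatsAfterUpAbove_zero.2 hF)
  refine ⟨?_, ?_, ?_⟩
  · rintro w ⟨hL, hU, hF, rfl⟩
    obtain ⟨ht, hlen⟩ := (hE hL hU hF).avoidingPath_psi hψ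
    obtain ⟨hM, hU'⟩ := ht.isMotzkin_upThenFlat
    exact ⟨hM, (hM.upThenFlat_iff.1 hU').1, (hM.upThenFlat_iff.1 hU').2, hlen⟩
  · rintro w ⟨hL, hU, hF, -⟩ w' ⟨hL', hU', hF', -⟩ h
    exact (hE hL hU hF).psi_inj hψ (hE hL' hU' hF') h
  · rintro t ⟨hM, hUU, hUD, rfl⟩
    obtain ⟨w, hw, rfl⟩ :=
      (avoidingPath_of_isMotzkin hM (hM.upThenFlat_iff.2 ⟨hUU, hUD⟩)).exists_psi_eq hψ
    obtain ⟨hL, hU, hF⟩ := hw.isLukas_upThenFlat_flatsAfterUpAbove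
    exact ⟨w, ⟨hL, hU, flatsAfterUpAbove_zero.1 hF, (hw.avoidingPath_psi hψ).2.symm⟩, rfl⟩
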